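/- Let (X,Y) be a random vector whose components have identical marginal CDF F, with joint law μ on ℝ². Let μ₊ be the law of (Z,Z) where Z has CDF F (the comonotonic coupling, with CDF min(F(x),F(y))), and let μ⊥ be the product measure with both marginals equal to the law of Z (with CDF F(x)F(y)). Then (X,Y) is quasi-r-Fréchet if and only if for all Borel sets A, B ⊆ ℝ: (μ(A×B) + μ(B×A))/2 = r·μ₊(A×B) + (1−r)·μ⊥(A×B). -/
import Mathlib

open MeasureTheory ProbabilityTheory
open scoped ENNReal

lemma qf_comb_eq {a b c d : ℝ≥0∞} {s t : ℝ} (ha : a ≠ ⊤) (hb : b ≠ ⊤) (hc : c ≠ ⊤) (hd : d ≠ ⊤)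
    (hs : 0 ≤ s) (ht : 0 ≤ t) :
    a + b = ENNReal.ofReal s * c + ENNReal.ofReal t * d ↔
      a.toReal + b.toReal = s * c.toReal + t * d.toReal := by
  conv_lhs => rw [← ENNReal.ofReal_toReal ha, ← ENNReal.ofReal_toReal hb,
    ← ENNReal.ofReal_toReal hc, ← ENNReal.ofReal_toReal hd]
  rw [← ENNReal.ofReal_mul hs, ← ENNReal.ofReal_mul ht,
    ← ENNReal.ofReal_add ENNReal.toReal_nonneg ENNReal.toReal_nonneg,
    ← ENNReal.ofReal_add (mul_nonneg hs ENNReal.toReal_nonneg) (mul_nonneg ht ENNReal.toReal_nonneg),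
    ENNReal.ofReal_eq_ofReal_iff (by positivity) (by positivity)]

lemma qf_comb_eq' {a b c d : ℝ≥0∞} {s t : ℝ} (ha : a ≠ ⊤) (hb : b ≠ ⊤) (hc : c ≠ ⊤) (hd : d ≠ ⊤)
    (hs : 0 ≤ s) (ht : 0 ≤ t) :
    ENNReal.ofReal t * d = a + b + ENNReal.ofReal s * c ↔
      t * d.toReal = a.toReal + b.toReal + s * c.toReal := by
  conv_lhs => rw [← ENNReal.ofReal_toReal ha, ← ENNReal.ofReal_toReal hb,
    ← ENNReal.ofReal_toReal hc, ← ENNReal.ofReal_toReal hd]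
  rw [← ENNReal.ofReal_mul hs, ← ENNReal.ofReal_mul ht,
    ← ENNReal.ofReal_add ENNReal.toReal_nonneg ENNReal.toReal_nonneg,
    ← ENNReal.ofReal_add (add_nonneg ENNReal.toReal_nonneg ENNReal.toReal_nonneg)
      (mul_nonneg hs ENNReal.toReal_nonneg),
    ENNReal.ofReal_eq_ofReal_iff (by positivity) (by positivity)]

lemma qf_gen : (inferInstance : MeasurableSpace (ℝ × ℝ)) =
    MeasurableSpace.generateFrom (Set.image2 (· ×ˢ ·) (Set.range Set.Iic) (Set.range Set.Iic)) := by
  have hspan : IsCountablySpanning (Set.range (Set.Iic : ℝ → Set ℝ)) :=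
    ⟨fun n => Set.Iic (n : ℝ), fun n => ⟨n, rfl⟩,
      Set.iUnion_eq_univ_iff.mpr fun x => (exists_nat_ge x).imp fun n hn => hn⟩
  have h1 : (inferInstance : MeasurableSpace ℝ) =
      MeasurableSpace.generateFrom (Set.range Set.Iic) := by
    rw [BorelSpace.measurable_eq (α := ℝ), borel_eq_generateFrom_Iic]
  rw [← generateFrom_prod_eq hspan hspan]
  rw [← h1]

variable {Ω : Type*} [MeasurableSpace Ω]

/-- `(X,Y)` with identical marginal CDF `F` and joint CDF `H` is quasi-`r`-Fréchet:
`(H(x,y) + H(y,x))/2 = r·min(F(x),F(y)) + (1-r)·F(x)F(y)` for all `x, y`. -/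
def QuasiFrechet (μ : Measure Ω) (X Y : Ω → ℝ) (r : ℝ) : Prop :=
  ∀ x y : ℝ,
    ((μ {ω | X ω ≤ x ∧ Y ω ≤ y}).toReal + (μ {ω | X ω ≤ y ∧ Y ω ≤ x}).toReal) / 2 =
      r * min ((μ {ω | X ω ≤ x}).toReal) ((μ {ω | X ω ≤ y}).toReal) +
        (1 - r) * ((μ {ω | X ω ≤ x}).toReal * (μ {ω | X ω ≤ y}).toReal)

/-- With `μ` the joint law of `(X,Y)`, `μ₊` the comonotonic coupling of the
common marginal and `μ⊥` the independent coupling, `(X,Y)` is quasi-`r`-Fréchet iff for all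
Borel `A, B`: `(μ(A×B) + μ(B×A))/2 = r·μ₊(A×B) + (1-r)·μ⊥(A×B)`. -/
theorem quasiFrechet_iff_sets
    (μ : Measure Ω) [IsProbabilityMeasure μ] (X Y : Ω → ℝ)
    (hXm : Measurable X) (hYm : Measurable Y)
    (hident : Measure.map X μ = Measure.map Y μ)
    (r : ℝ) (hr : r ∈ Set.Icc (-1 : ℝ) 1) :
    QuasiFrechet μ X Y r ↔
      ∀ A B : Set ℝ, MeasurableSet A → MeasurableSet B →
        ((Measure.map (fun ω => (X ω, Y ω)) μ (A ×ˢ B)).toReal +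
            (Measure.map (fun ω => (X ω, Y ω)) μ (B ×ˢ A)).toReal) / 2 =
          r * (Measure.map (fun z : ℝ => (z, z)) (Measure.map X μ) (A ×ˢ B)).toReal +
            (1 - r) * (((Measure.map X μ).prod (Measure.map X μ)) (A ×ˢ B)).toReal := by
  set F : Measure ℝ := Measure.map X μ with hF
  set μ₁ : Measure (ℝ × ℝ) := Measure.map (fun ω => (X ω, Y ω)) μ with hμ₁
  set μ₂ : Measure (ℝ × ℝ) := Measure.map (fun ω => (Y ω, X ω)) μ with hμ₂
  set μp : Measure (ℝ × ℝ) := Measure.map (fun z : ℝ => (z, z)) F with hμp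
  set μi : Measure (ℝ × ℝ) := F.prod F with hμi
  haveI : IsProbabilityMeasure μ₁ := Measure.isProbabilityMeasure_map (hXm.prodMk hYm).aemeasurable
  haveI : IsProbabilityMeasure μ₂ := Measure.isProbabilityMeasure_map (hYm.prodMk hXm).aemeasurable
  haveI : IsProbabilityMeasure F := Measure.isProbabilityMeasure_map hXm.aemeasurable
  haveI : IsProbabilityMeasure μp :=
    Measure.isProbabilityMeasure_map (measurable_id.prodMk measurable_id).aemeasurable
  haveI : IsProbabilityMeasure μi := by rw [hμi]; infer_instance
  -- pointwise facts
  have hIic1 : ∀ x y : ℝ, μ₁ (Set.Iic x ×ˢ Set.Iic y) = μ {ω | X ω ≤ x ∧ Y ω ≤ y} := by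
    intro x y
    rw [hμ₁, Measure.map_apply (hXm.prodMk hYm) (measurableSet_Iic.prod measurableSet_Iic)]
    rfl
  have hIic2 : ∀ x y : ℝ, μ₂ (Set.Iic x ×ˢ Set.Iic y) = μ {ω | X ω ≤ y ∧ Y ω ≤ x} := by
    intro x y
    rw [hμ₂, Measure.map_apply (hYm.prodMk hXm) (measurableSet_Iic.prod measurableSet_Iic)]
    congr 1
    ext ω
    exact and_comm
  have hFX : ∀ x : ℝ, F (Set.Iic x) = μ {ω | X ω ≤ x} := by
    intro x
    rw [hF, Measure.map_apply hXm measurableSet_Iic]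
    rfl
  have hp : ∀ x y : ℝ, μp (Set.Iic x ×ˢ Set.Iic y) = min (F (Set.Iic x)) (F (Set.Iic y)) := by
    intro x y
    have hm : Measurable (fun z : ℝ => (z, z)) := measurable_id.prodMk measurable_id
    rw [hμp, Measure.map_apply hm (measurableSet_Iic.prod measurableSet_Iic)]
    have hpre : (fun z : ℝ => (z, z)) ⁻¹' (Set.Iic x ×ˢ Set.Iic y) = Set.Iic (min x y) := by
      ext z; simp [Set.mem_prod, le_min_iff]
    rw [hpre]
    rcases le_total x y with h | h
    · rw [min_eq_left h, eq_comm, min_eq_left (measure_mono (Set.Iic_subset_Iic.mpr h))]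
    · rw [min_eq_right h, eq_comm, min_eq_right (measure_mono (Set.Iic_subset_Iic.mpr h))]
  have hi : ∀ x y : ℝ, μi (Set.Iic x ×ˢ Set.Iic y) = F (Set.Iic x) * F (Set.Iic y) := by
    intro x y
    rw [hμi, Measure.prod_prod]
  have hswap : ∀ A B : Set ℝ, MeasurableSet A → MeasurableSet B →
      μ₁ (B ×ˢ A) = μ₂ (A ×ˢ B) := by
    intro A B hA hB
    rw [hμ₁, hμ₂, Measure.map_apply (hXm.prodMk hYm) (hB.prod hA),
      Measure.map_apply (hYm.prodMk hXm) (hA.prod hB)]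
    congr 1
    ext ω
    exact and_comm
  -- the rescaled statement
  set P : Set ℝ → Set ℝ → Prop := fun A B =>
    (μ₁ (A ×ˢ B)).toReal + (μ₂ (A ×ˢ B)).toReal =
      2 * r * (μp (A ×ˢ B)).toReal + 2 * (1 - r) * (μi (A ×ˢ B)).toReal with hP
  have hQF_iff : QuasiFrechet μ X Y r ↔ ∀ x y : ℝ, P (Set.Iic x) (Set.Iic y) := by
    unfold QuasiFrechet
    simp only [hP]
    refine forall_congr' fun x => forall_congr' fun y => ?_
    rw [hIic1, hIic2, hp, hi, ENNReal.toReal_min (measure_ne_top _ _) (measure_ne_top _ _),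
      ENNReal.toReal_mul, hFX, hFX]
    constructor <;> intro h <;> linarith
  have hmain : (∀ x y : ℝ, P (Set.Iic x) (Set.Iic y)) →
      ∀ A B : Set ℝ, MeasurableSet A → MeasurableSet B → P A B := by
    intro h A B hA hB
    rcases le_or_gt 0 r with hr0 | hr0
    · have hs : 0 ≤ 2 * r := by linarith
      have ht : 0 ≤ 2 * (1 - r) := by linarith [hr.2]
      have hext : μ₁ + μ₂ = ENNReal.ofReal (2 * r) • μp + ENNReal.ofReal (2 * (1 - r)) • μi := by
        refine ext_of_generate_finite _ qf_gen (isPiSystem_Iic.prod isPiSystem_Iic) ?_ ?_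
        · rintro _ ⟨s, ⟨x, rfl⟩, t, ⟨y, rfl⟩, rfl⟩
          simp only [Measure.add_apply, Measure.smul_apply, smul_eq_mul]
          exact (qf_comb_eq (measure_ne_top _ _) (measure_ne_top _ _) (measure_ne_top _ _)
            (measure_ne_top _ _) hs ht).mpr (h x y)
        · simp only [Measure.add_apply, Measure.smul_apply, smul_eq_mul]
          rw [qf_comb_eq (measure_ne_top _ _) (measure_ne_top _ _) (measure_ne_top _ _)
            (measure_ne_top _ _) hs ht]
          simp [measure_univ]
          ring
      have h5 : (μ₁ + μ₂) (A ×ˢ B) =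
          (ENNReal.ofReal (2 * r) • μp + ENNReal.ofReal (2 * (1 - r)) • μi) (A ×ˢ B) := by
        rw [hext]
      simp only [Measure.add_apply, Measure.smul_apply, smul_eq_mul] at h5
      exact (qf_comb_eq (measure_ne_top _ _) (measure_ne_top _ _) (measure_ne_top _ _)
        (measure_ne_top _ _) hs ht).mp h5
    · have hs : 0 ≤ 2 * (-r) := by linarith
      have ht : 0 ≤ 2 * (1 - r) := by linarith [hr.2]
      haveI : IsFiniteMeasure (ENNReal.ofReal (2 * (1 - r)) • μi) := by
        constructor
        rw [Measure.smul_apply, smul_eq_mul]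
        exact ENNReal.mul_lt_top ENNReal.ofReal_lt_top (measure_lt_top _ _)
      have hext : ENNReal.ofReal (2 * (1 - r)) • μi =
          μ₁ + μ₂ + ENNReal.ofReal (2 * (-r)) • μp := by
        refine ext_of_generate_finite _ qf_gen (isPiSystem_Iic.prod isPiSystem_Iic) ?_ ?_
        · rintro _ ⟨s, ⟨x, rfl⟩, t, ⟨y, rfl⟩, rfl⟩
          simp only [Measure.add_apply, Measure.smul_apply, smul_eq_mul]
          rw [qf_comb_eq' (measure_ne_top _ _) (measure_ne_top _ _) (measure_ne_top _ _)
            (measure_ne_top _ _) hs ht]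
          have := h x y
          linarith
        · simp only [Measure.add_apply, Measure.smul_apply, smul_eq_mul]
          rw [qf_comb_eq' (measure_ne_top _ _) (measure_ne_top _ _) (measure_ne_top _ _)
            (measure_ne_top _ _) hs ht]
          simp [measure_univ]
          ring
      have h5 : (ENNReal.ofReal (2 * (1 - r)) • μi) (A ×ˢ B) =
          (μ₁ + μ₂ + ENNReal.ofReal (2 * (-r)) • μp) (A ×ˢ B) := by
        rw [hext]
      simp only [Measure.add_apply, Measure.smul_apply, smul_eq_mul] at h5
      have h6 := (qf_comb_eq' (measure_ne_top _ _) (measure_ne_top _ _) (measure_ne_top _ _)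
        (measure_ne_top _ _) hs ht).mp h5
      simp only [hP]
      linarith
  constructor
  · intro h A B hA hB
    have h7 := hmain (hQF_iff.mp h) A B hA hB
    simp only [hP] at h7
    rw [hswap A B hA hB]
    linarith
  · intro h
    rw [hQF_iff]
    intro x y
    have h8 := h (Set.Iic x) (Set.Iic y) measurableSet_Iic measurableSet_Iic
    rw [hswap (Set.Iic x) (Set.Iic y) measurableSet_Iic measurableSet_Iic] at h8
    simp only [hP]
    linarith
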